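/- arXiv:alg-geom/9306011 — 2 statements merged into one kernel-verified Lean document; each statement's English description precedes it below -/
import Mathlib

section
/- The exceptional set Z(Σ) = V(B(Σ)) ⊂ A^n decomposes into irreducible components as the union of the subspaces A(P), where P runs over all primitive collections of Σ. -/
open scoped BigOperators

/-- The polyhedral cone in `ℝ^d` spanned by the ray generators `e i`, `i ∈ σ`. -/
def fanConeSet {d n : ℕ} (e : Fin n → Fin d → ℤ) (σ : Finset (Fin n)) :
    Set (Fin d → ℝ) :=
  {v | ∃ c : Fin n → ℝ, (∀ i, 0 ≤ c i) ∧ (∀ i ∉ σ, c i = 0) ∧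
    v = ∑ i, c i • (fun j => (e i j : ℝ))}

/-- A complete rational simplicial `d`-dimensional fan with `n` one-dimensional
cones, recorded via the primitive integral generators `e i ∈ N = ℤ^d` of its
rays and the collection of subsets of rays spanning cones of the fan. -/
structure CompleteFan (d n : ℕ) where
  /-- the primitive integral generators of the rays -/
  e : Fin n → Fin d → ℤ
  /-- which subsets of rays span a cone of the fan -/
  isCone : Finset (Fin n) → Prop
  empty_mem : isCone ∅
  singleton_mem : ∀ i, isCone {i}
  downward : ∀ {σ τ : Finset (Fin n)}, isCone σ → τ ⊆ σ → isCone τ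
  indep : ∀ {σ : Finset (Fin n)}, isCone σ →
    LinearIndependent ℝ (fun i : σ => fun j => (e i j : ℝ))
  inter : ∀ {σ τ : Finset (Fin n)}, isCone σ → isCone τ →
    fanConeSet e σ ∩ fanConeSet e τ = fanConeSet e (σ ∩ τ)
  complete : ∀ v : Fin d → ℝ, ∃ σ, isCone σ ∧ v ∈ fanConeSet e σ
  primitive : ∀ i (k : ℤ) (w : Fin d → ℤ), e i = (fun j => k * w j) → k = 1 ∨ k = -1

/-- A primitive collection: a set of ray generators that does not span a cone
of `Σ`, while every proper subset does span a cone of `Σ`. -/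
def IsPrimitiveCollection {d n : ℕ} (F : CompleteFan d n)
    (P : Finset (Fin n)) : Prop :=
  ¬ F.isCone P ∧ ∀ Q : Finset (Fin n), Q ⊂ P → F.isCone Q

lemma exists_primitive_subset {d n : ℕ} (F : CompleteFan d n) :
    ∀ S : Finset (Fin n), ¬ F.isCone S → ∃ P, IsPrimitiveCollection F P ∧ P ⊆ S := by
  intro S
  induction S using Finset.strongInduction with
  | _ S ih =>
    intro h
    by_cases hall : ∀ Q, Q ⊂ S → F.isCone Q
    · exact ⟨S, ⟨h, hall⟩, subset_rfl⟩
    · push_neg at hall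
      obtain ⟨Q, hQS, hQ⟩ := hall
      obtain ⟨P, hP, hPQ⟩ := ih Q hQS hQ
      exact ⟨P, hP, hPQ.trans hQS.subset⟩

/-- the exceptional set `Z(Σ) = V(B(Σ)) ⊂ ℂⁿ` (the common zero
locus of the monomials `ẑ_σ = ∏_{i ∉ σ} z_i` for cones `σ ∈ Σ`) decomposes into
irreducible components as the union of the coordinate subspaces `A(P)`, `P`
running over all primitive collections of `Σ`; moreover no `A(P)` is contained
in another one, so that these are exactly the irreducible components. -/
theorem Z_decomposition {d n : ℕ} (F : CompleteFan d n) :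
    ({z : Fin n → ℂ | ∀ σ : Finset (Fin n), F.isCone σ → ∏ i ∈ σᶜ, z i = 0}
      = ⋃ P ∈ {P : Finset (Fin n) | IsPrimitiveCollection F P},
          {z : Fin n → ℂ | ∀ i ∈ P, z i = 0})
    ∧ ∀ P P' : Finset (Fin n), IsPrimitiveCollection F P →
        IsPrimitiveCollection F P' →
        ({z : Fin n → ℂ | ∀ i ∈ P, z i = 0} ⊆
          {z : Fin n → ℂ | ∀ i ∈ P', z i = 0}) → P = P' := by
  classical
  constructor
  · ext z
    simp only [Set.mem_setOf_eq, Set.mem_iUnion, exists_prop]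
    constructor
    · intro hz
      set S : Finset (Fin n) := Finset.univ.filter (fun i => z i = 0) with hS
      have hScone : ¬ F.isCone S := by
        intro hc
        obtain ⟨i, hi, hzi⟩ := Finset.prod_eq_zero_iff.mp (hz S hc)
        exact (Finset.mem_compl.mp hi) (Finset.mem_filter.mpr ⟨Finset.mem_univ i, hzi⟩)
      obtain ⟨P, hP, hPS⟩ := exists_primitive_subset F S hScone
      exact ⟨P, hP, fun i hi => (Finset.mem_filter.mp (hPS hi)).2⟩
    · rintro ⟨P, hP, hz⟩ σ hσ
      have : ¬ P ⊆ σ := fun hsub => hP.1 (F.downward hσ hsub)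
      obtain ⟨i, hiP, hiσ⟩ := Finset.not_subset.mp this
      exact Finset.prod_eq_zero (Finset.mem_compl.mpr hiσ) (hz i hiP)
  · intro P P' hP hP' hsub
    have hz : (fun i => if i ∈ P then (0 : ℂ) else 1) ∈
        {z : Fin n → ℂ | ∀ i ∈ P, z i = 0} := by
      intro i hi; simp [hi]
    have hP'P : P' ⊆ P := by
      intro i hi
      have := hsub hz i hi
      by_contra h
      simp [h] at this
    rcases eq_or_lt_of_le (Finset.le_iff_subset.mpr hP'P) with h | h
    · exact h.symm
    · exact absurd (hP.2 P' (Finset.lt_iff_ssubset.mp h)) hP'.1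
end

section
/- If Σ is a complete simplicial fan of dimension d with n one-dimensional cones, then either 2 ≤ codim Z(Σ) ≤ ⌊d/2⌋ + 1, or n = d+1 and Z(Σ) = {0}. -/
open scoped BigOperators

/-- The codimension of `Z(Σ) ⊂ ℂⁿ`, which equals the minimal cardinality of a
primitive collection of `Σ`. -/
noncomputable def codimZ {d n : ℕ} (F : CompleteFan d n) : ℕ :=
  sInf {k : ℕ | ∃ P : Finset (Fin n), IsPrimitiveCollection F P ∧ P.card = k}

/-! ### Auxiliary counting lemmas -/

section Bal

variable {n : ℕ}

/-- number of positive coordinates -/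
noncomputable def pcount {n : ℕ} (x : Fin n → ℝ) : ℕ :=
  (Finset.univ.filter fun i => 0 < x i).card

/-- number of negative coordinates -/
noncomputable def qcount {n : ℕ} (x : Fin n → ℝ) : ℕ :=
  (Finset.univ.filter fun i => x i < 0).card

lemma qcount_neg (x : Fin n → ℝ) : qcount (-x) = pcount x := by
  unfold pcount qcount
  congr 1
  apply Finset.filter_congr
  intro i _
  simp [neg_lt_zero]

lemma pcount_neg (x : Fin n → ℝ) : pcount (-x) = qcount x := by
  unfold pcount qcount
  congr 1
  apply Finset.filter_congr
  intro i _
  simp [neg_pos]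

lemma pq_le_supp (x : Fin n → ℝ) :
    pcount x + qcount x ≤ (Finset.univ.filter fun i => x i ≠ 0).card := by
  classical
  unfold pcount qcount
  rw [← Finset.card_union_of_disjoint]
  · apply Finset.card_le_card
    intro i hi
    simp only [Finset.mem_union, Finset.mem_filter, Finset.mem_univ, true_and] at hi ⊢
    rcases hi with h | h
    · exact ne_of_gt h
    · exact ne_of_lt h
  · rw [Finset.disjoint_left]
    intro i hi hj
    simp only [Finset.mem_filter, Finset.mem_univ, true_and] at hi hj
    exact absurd hj (not_lt.mpr (le_of_lt hi))

lemma isOpen_pcount_ge (m : ℕ) :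
    IsOpen {x : Fin n → ℝ | m ≤ pcount x} := by
  classical
  rw [isOpen_iff_mem_nhds]
  intro x hx
  set S := Finset.univ.filter fun i => 0 < x i with hS
  have hU : IsOpen {y : Fin n → ℝ | ∀ i ∈ S, 0 < y i} := by
    have : {y : Fin n → ℝ | ∀ i ∈ S, 0 < y i} = ⋂ i ∈ S, {y : Fin n → ℝ | 0 < y i} := by
      ext y; simp
    rw [this]
    exact isOpen_biInter_finset fun i _ => isOpen_lt continuous_const (continuous_apply i)
  refine Filter.mem_of_superset (hU.mem_nhds ?_) ?_
  · intro i hi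
    exact (Finset.mem_filter.mp hi).2
  · intro y hy
    refine le_trans hx (Finset.card_le_card ?_)
    intro i hi
    simp only [Finset.mem_filter, Finset.mem_univ, true_and]
    exact hy i hi

lemma isOpen_qcount_ge (m : ℕ) :
    IsOpen {x : Fin n → ℝ | m ≤ qcount x} := by
  have : {x : Fin n → ℝ | m ≤ qcount x} = (fun x : Fin n → ℝ => -x) ⁻¹' {x | m ≤ pcount x} := by
    ext x
    simp [Set.mem_preimage, pcount_neg]
  rw [this]
  exact (isOpen_pcount_ge m).preimage continuous_neg

/-- In a two-dimensional space of vectors each having at most `2m+1` nonzero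
coordinates, some nonzero vector has at most `m` positive and at most `m`
negative coordinates. -/
lemma exists_balanced (m : ℕ) (Y : Submodule ℝ (Fin n → ℝ)) (hY : Module.finrank ℝ Y = 2)
    (hsupp : ∀ lam ∈ Y, (Finset.univ.filter fun i => lam i ≠ 0).card ≤ 2 * m + 1) :
    ∃ lam ∈ Y, lam ≠ 0 ∧ pcount lam ≤ m ∧ qcount lam ≤ m := by
  classical
  by_contra hcon
  push_neg at hcon
  have htype : ∀ lam ∈ Y, lam ≠ 0 → m + 1 ≤ pcount lam ∨ m + 1 ≤ qcount lam := by
    intro lam hmem hne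
    rcases le_or_gt (pcount lam) m with h1 | h1
    · rcases le_or_gt (qcount lam) m with h2 | h2
      · exact absurd (hcon lam hmem hne h1) (not_lt.mpr h2)
      · exact Or.inr h2
    · exact Or.inl h1
  have hexcl : ∀ lam ∈ Y, ¬(m + 1 ≤ pcount lam ∧ m + 1 ≤ qcount lam) := by
    rintro lam hmem ⟨h1, h2⟩
    have := pq_le_supp lam
    have := hsupp lam hmem
    omega
  have : FiniteDimensional ℝ Y := inferInstance
  let b := Module.finBasisOfFinrankEq ℝ Y hY
  set a : Fin n → ℝ := ((b 0 : Y) : Fin n → ℝ) with ha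
  set v : Fin n → ℝ := ((b 1 : Y) : Fin n → ℝ) with hv
  have haY : a ∈ Y := (b 0).2
  have hvY : v ∈ Y := (b 1).2
  have hind : ∀ s t : ℝ, s • a + t • v = 0 → s = 0 ∧ t = 0 := by
    intro s t hst
    have hli : LinearIndependent ℝ (fun i : Fin 2 => ((b i : Y) : Fin n → ℝ)) := by
      have := b.linearIndependent
      have h2 := this.map' Y.subtype (Submodule.ker_subtype Y)
      exact h2
    have := Fintype.linearIndependent_iff.mp hli (fun i => if i = 0 then s else t)
    have hsum : ∑ i : Fin 2, (if i = 0 then s else t) • ((b i : Y) : Fin n → ℝ) = 0 := by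
      rw [Fin.sum_univ_two]
      simpa using hst
    exact ⟨by simpa using this hsum 0, by simpa using this hsum 1⟩
  have hane : a ≠ 0 := by
    intro h
    rcases hind 1 0 (by simp [h]) with ⟨h1, _⟩
    norm_num at h1
  have hvne : v ≠ 0 := by
    intro h
    rcases hind 0 1 (by simp [h]) with ⟨_, h1⟩
    norm_num at h1
  obtain ⟨x, y, hxY, hyY, hxyind, hxP, hyQ⟩ :
      ∃ x y : Fin n → ℝ, x ∈ Y ∧ y ∈ Y ∧ (∀ s t : ℝ, s • x + t • y = 0 → s = 0 ∧ t = 0) ∧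
        m + 1 ≤ pcount x ∧ m + 1 ≤ qcount y := by
    rcases htype a haY hane with hA | hA
    · rcases htype v hvY hvne with hV | hV
      · refine ⟨v, -a, hvY, Y.neg_mem haY, ?_, hV, by rwa [qcount_neg]⟩
        intro s t hst
        have := hind (-t) s (by rw [← hst]; module)
        exact ⟨this.2, by simpa using this.1⟩
      · exact ⟨a, v, haY, hvY, hind, hA, hV⟩
    · rcases htype v hvY hvne with hV | hV
      · refine ⟨v, a, hvY, haY, ?_, hV, hA⟩
        intro s t hst
        have := hind t s (by rw [← hst]; module)
        exact ⟨this.2, this.1⟩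
      · refine ⟨-a, v, Y.neg_mem haY, hvY, ?_, by rwa [pcount_neg], hV⟩
        intro s t hst
        have := hind (-s) t (by rw [← hst]; module)
        exact ⟨by simpa using this.1, this.2⟩
  set γ : ℝ → (Fin n → ℝ) := fun t => (1 - t) • x + t • y with hγ
  have hγcont : Continuous γ := by
    apply Continuous.add
    · exact (continuous_const.sub continuous_id).smul continuous_const
    · exact continuous_id.smul continuous_const
  have hγY : ∀ t, γ t ∈ Y := fun t => Y.add_mem (Y.smul_mem _ hxY) (Y.smul_mem _ hyY)
  have hγne : ∀ t, γ t ≠ 0 := by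
    intro t h
    rcases hxyind (1 - t) t h with ⟨h1, h2⟩
    rw [h2] at h1
    norm_num at h1
  have hpre := isPreconnected_Icc (a := (0:ℝ)) (b := 1)
  have hres := hpre (γ ⁻¹' {z | m + 1 ≤ pcount z}) (γ ⁻¹' {z | m + 1 ≤ qcount z})
    ((isOpen_pcount_ge (m+1)).preimage hγcont) ((isOpen_qcount_ge (m+1)).preimage hγcont)
    (by
      intro t _
      rcases htype (γ t) (hγY t) (hγne t) with h | h
      · exact Or.inl h
      · exact Or.inr h)
    (by
      refine ⟨0, Set.mem_Icc.mpr (by norm_num), ?_⟩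
      simp only [Set.mem_preimage, Set.mem_setOf_eq, hγ]
      norm_num
      exact hxP)
    (by
      refine ⟨1, Set.mem_Icc.mpr (by norm_num), ?_⟩
      simp only [Set.mem_preimage, Set.mem_setOf_eq, hγ]
      norm_num
      exact hyQ)
  obtain ⟨t, _, htP, htQ⟩ := hres
  exact hexcl (γ t) (hγY t) ⟨htP, htQ⟩

end Bal

/-! ### Cutting a subspace down to dimension two with small supports -/

section Shrink

variable {n : ℕ}

set_option synthInstance.maxHeartbeats 1000000 in
lemma shrink (k : ℕ) : ∀ (W : Submodule ℝ (Fin n → ℝ)) (T : Finset (Fin n)),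
    Module.finrank ℝ W = k + 2 → (∀ lam ∈ W, ∀ i ∉ T, lam i = 0) →
    ∃ Y : Submodule ℝ (Fin n → ℝ), Y ≤ W ∧ Module.finrank ℝ Y = 2 ∧
      ∃ T' : Finset (Fin n), T'.card + k ≤ T.card ∧ ∀ lam ∈ Y, ∀ i ∉ T', lam i = 0 := by
  classical
  induction k with
  | zero =>
    intro W T h1 h2
    exact ⟨W, le_rfl, h1, T, by omega, h2⟩
  | succ k ih =>
    intro W T h1 h2
    have hW : W ≠ ⊥ := by
      intro h
      rw [h, finrank_bot] at h1
      omega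
    obtain ⟨lam₀, hlam₀W, hlam₀⟩ := Submodule.exists_mem_ne_zero_of_ne_bot hW
    obtain ⟨i₀, hi₀⟩ : ∃ i, lam₀ i ≠ 0 := by
      by_contra h
      push_neg at h
      exact hlam₀ (funext h)
    have hi₀T : i₀ ∈ T := by
      by_contra h
      exact hi₀ (h2 _ hlam₀W _ h)
    set g : (Fin n → ℝ) →ₗ[ℝ] ℝ := LinearMap.proj i₀ with hg
    set W' : Submodule ℝ (Fin n → ℝ) := W ⊓ LinearMap.ker g with hW'
    set f : W →ₗ[ℝ] ℝ := g.comp W.subtype with hf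
    have hker : Submodule.map W.subtype (LinearMap.ker f) = W' := by
      rw [hf, LinearMap.ker_comp, Submodule.map_comap_subtype]
    have hrange : Module.finrank ℝ (LinearMap.range f) = 1 := by
      have hne : LinearMap.range f ≠ ⊥ := by
        intro h
        have hmem : f ⟨lam₀, hlam₀W⟩ ∈ LinearMap.range f := LinearMap.mem_range_self _ _
        rw [h, Submodule.mem_bot] at hmem
        exact hi₀ hmem
      have h1' : Module.finrank ℝ (LinearMap.range f) ≤ 1 := by
        simpa using (LinearMap.range f).finrank_le
      have h2' : 0 < Module.finrank ℝ (LinearMap.range f) := by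
        rcases Nat.eq_zero_or_pos (Module.finrank ℝ (LinearMap.range f)) with h | h
        · exact absurd (Submodule.finrank_eq_zero.mp h) hne
        · exact h
      omega
    have hkerrank : Module.finrank ℝ (LinearMap.ker f) = k + 2 := by
      have := LinearMap.finrank_range_add_finrank_ker f
      rw [hrange, h1] at this
      omega
    have hW'rank : Module.finrank ℝ W' = k + 2 := by
      have heq : Module.finrank ℝ (LinearMap.ker f)
          = Module.finrank ℝ (Submodule.map W.subtype (LinearMap.ker f)) :=
        (Submodule.equivSubtypeMap W (LinearMap.ker f)).finrank_eq
      rw [hker] at heq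
      rw [← heq, hkerrank]
    have h2' : ∀ lam ∈ W', ∀ i ∉ T.erase i₀, lam i = 0 := by
      intro lam hmem i hi
      rcases Decidable.em (i = i₀) with rfl | hne'
      · exact LinearMap.mem_ker.mp (Submodule.mem_inf.mp hmem).2
      · have hnT : i ∉ T := fun hiT => hi (Finset.mem_erase.mpr ⟨hne', hiT⟩)
        exact h2 lam (Submodule.mem_inf.mp hmem).1 i hnT
    obtain ⟨Y, hYle, hYrank, T', hT'card, hT'⟩ := ih W' (T.erase i₀) hW'rank h2'
    refine ⟨Y, le_trans hYle inf_le_left, hYrank, T', ?_, hT'⟩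
    have hce := Finset.card_erase_of_mem hi₀T
    have hTpos : 0 < T.card := Finset.card_pos.mpr ⟨i₀, hi₀T⟩
    omega

end Shrink

/-! ### Fan lemmas -/

section Fan

variable {d n : ℕ}

/-- The linear map sending coefficients to the corresponding combination of
the ray generators. -/
noncomputable def depMap (e : Fin n → Fin d → ℤ) : (Fin n → ℝ) →ₗ[ℝ] (Fin d → ℝ) where
  toFun := fun lam => ∑ i, lam i • (fun j => (e i j : ℝ))
  map_add' := by
    intro x y
    simp [add_smul, Finset.sum_add_distrib]
  map_smul' := by
    intro c x
    simp [smul_smul, Finset.smul_sum]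

lemma depMap_apply (e : Fin n → Fin d → ℤ) (lam : Fin n → ℝ) :
    depMap e lam = ∑ i, lam i • (fun j => (e i j : ℝ)) := rfl

/-- `0` is the only element of the cone on the empty set. -/
lemma fanConeSet_empty (e : Fin n → Fin d → ℤ) : fanConeSet e (∅ : Finset (Fin n)) = {0} := by
  ext v
  constructor
  · rintro ⟨c, _, hc, hv⟩
    have : ∀ i, c i = 0 := fun i => hc i (Finset.notMem_empty i)
    simp only [Set.mem_singleton_iff, hv]
    apply Finset.sum_eq_zero
    intro i _
    rw [this i, zero_smul]
  · rintro rfl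
    exact ⟨0, fun i => le_rfl, fun i _ => rfl, by simp⟩

lemma depMap_surj (F : CompleteFan d n) : Function.Surjective (depMap F.e) := by
  intro v
  obtain ⟨σ, _, c, _, _, hv⟩ := F.complete v
  exact ⟨c, hv.symm⟩

lemma exists_pos_dep (F : CompleteFan d n) :
    ∃ mu : Fin n → ℝ, (∀ i, 0 < mu i) ∧ depMap F.e mu = 0 := by
  obtain ⟨σ, _, c, hc0, _, hv⟩ := F.complete (depMap F.e (fun _ => (-1 : ℝ)))
  have hvc : depMap F.e c = depMap F.e (fun _ => (-1 : ℝ)) := hv.symm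
  refine ⟨fun i => c i + 1, fun i => by have := hc0 i; show 0 < c i + 1; linarith, ?_⟩
  have h1 : (fun i => c i + 1) = c + (fun _ => (1 : ℝ)) := rfl
  rw [h1, map_add, hvc, ← map_add]
  have h2 : ((fun _ => (-1 : ℝ)) + fun _ => (1 : ℝ)) = (0 : Fin n → ℝ) := by
    funext i; simp
  rw [h2, map_zero]

lemma range_depMap_top (F : CompleteFan d n) : LinearMap.range (depMap F.e) = ⊤ :=
  LinearMap.range_eq_top.mpr (depMap_surj F)

lemma finrank_ker_depMap (F : CompleteFan d n) :
    Module.finrank ℝ (LinearMap.ker (depMap F.e)) + d = n := by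
  have := LinearMap.finrank_range_add_finrank_ker (depMap F.e)
  rw [range_depMap_top F, finrank_top] at this
  simp only [Module.finrank_fintype_fun_eq_card, Fintype.card_fin] at this
  omega

lemma n_ge_d_add_one (hd : 0 < d) (F : CompleteFan d n) : d + 1 ≤ n := by
  have hk := finrank_ker_depMap F
  rcases Nat.lt_or_ge n (d + 1) with h | h
  · exfalso
    have hk0 : Module.finrank ℝ (LinearMap.ker (depMap F.e)) = 0 := by omega
    have hker : LinearMap.ker (depMap F.e) = ⊥ := Submodule.finrank_eq_zero.mp hk0
    obtain ⟨mu, hmu0, hmudep⟩ := exists_pos_dep F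
    have hmem : mu ∈ LinearMap.ker (depMap F.e) := LinearMap.mem_ker.mpr hmudep
    rw [hker, Submodule.mem_bot] at hmem
    have hn1 : 0 < n := by omega
    have := hmu0 ⟨0, hn1⟩
    rw [hmem] at this
    simp at this
  · exact h

lemma cone_coeff_zero (F : CompleteFan d n) {A : Finset (Fin n)} (hA : F.isCone A)
    {g : Fin n → ℝ} (h : ∑ i ∈ A, g i • (fun j => (F.e i j : ℝ)) = (0 : Fin d → ℝ)) :
    ∀ i ∈ A, g i = 0 := by
  have hli := F.indep hA
  have hsum : ∑ i : A, g i • (fun j => (F.e i j : ℝ)) = (0 : Fin d → ℝ)  := by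
    rw [Finset.sum_coe_sort A (fun i => g i • (fun j => (F.e i j : ℝ)))]
    exact h
  have := Fintype.linearIndependent_iff.mp hli (fun i : A => g (i : Fin n)) hsum
  intro i hi
  exact this ⟨i, hi⟩

lemma posPart_mem (e : Fin n → Fin d → ℤ) (lam : Fin n → ℝ) :
    (∑ i ∈ Finset.univ.filter (fun i => 0 < lam i), lam i • (fun j => (e i j : ℝ)))
      ∈ fanConeSet e (Finset.univ.filter (fun i => 0 < lam i)) := by
  classical
  refine ⟨fun i => max (lam i) 0, fun i => le_max_right _ _, ?_, ?_⟩
  · intro i hi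
    simp only [Finset.mem_filter, Finset.mem_univ, true_and, not_lt] at hi
    exact max_eq_right hi
  · have h1 : ∑ i, (max (lam i) 0) • (fun j => (e i j : ℝ))
        = ∑ i ∈ Finset.univ.filter (fun i => 0 < lam i),
            (max (lam i) 0) • (fun j => (e i j : ℝ)) := by
      symm
      apply Finset.sum_subset (Finset.subset_univ _)
      intro i _ hi
      simp only [Finset.mem_filter, Finset.mem_univ, true_and, not_lt] at hi
      rw [max_eq_right hi, zero_smul]
    rw [h1]
    apply Finset.sum_congr rfl
    intro i hi
    simp only [Finset.mem_filter, Finset.mem_univ, true_and] at hi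
    rw [max_eq_left (le_of_lt hi)]

/-- The key geometric step: if every set of at most `⌊d/2⌋+1` rays is a cone of
the fan, then `n < d + 2`. -/
lemma no_big_fan (hd : 0 < d) (F : CompleteFan d n)
    (hB : ∀ A : Finset (Fin n), A.card ≤ d / 2 + 1 → F.isCone A)
    (h2 : d + 2 ≤ n) : False := by
  classical
  set m := d / 2 + 1 with hm
  set W := LinearMap.ker (depMap F.e) with hWdef
  have hkd := finrank_ker_depMap F
  rw [← hWdef] at hkd
  have hfr : Module.finrank ℝ W = (n - d - 2) + 2 := by omega
  obtain ⟨Y, hYW, hY2, T', hT'card, hT'supp⟩ := shrink (n - d - 2) W Finset.univ hfr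
      (fun lam _ i hi => absurd (Finset.mem_univ i) hi)
  have hT'small : T'.card ≤ d + 2 := by
    rw [Finset.card_univ, Fintype.card_fin] at hT'card
    omega
  have hsupp : ∀ lam ∈ Y, (Finset.univ.filter fun i => lam i ≠ 0).card ≤ 2 * m + 1 := by
    intro lam hmem
    have hsub : (Finset.univ.filter fun i => lam i ≠ 0) ⊆ T' := by
      intro i hi
      simp only [Finset.mem_filter, Finset.mem_univ, true_and] at hi
      by_contra h
      exact hi (hT'supp lam hmem i h)
    have := Finset.card_le_card hsub
    omega
  obtain ⟨lam, hlamY, hlamne, hp, hq⟩ := exists_balanced m Y hY2 hsupp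
  set A := Finset.univ.filter (fun i => 0 < lam i) with hA
  set B := Finset.univ.filter (fun i => lam i < 0) with hB'
  have hconeA : F.isCone A := hB A hp
  have hconeB : F.isCone B := hB B hq
  have hlamker : ∑ i, lam i • (fun j => (F.e i j : ℝ)) = (0 : Fin d → ℝ) := by
    have : lam ∈ W := hYW hlamY
    rw [hWdef, LinearMap.mem_ker] at this
    exact this
  -- the common point
  set x : Fin d → ℝ := ∑ i ∈ A, lam i • (fun j => (F.e i j : ℝ)) with hx
  have hxA : x ∈ fanConeSet F.e A := posPart_mem F.e lam
  -- x = ∑_{i ∈ B} (-lam i) • e i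
  have hxB' : x = ∑ i ∈ B, (-lam i) • (fun j => (F.e i j : ℝ)) := by
    have hsplit := Finset.sum_filter_add_sum_filter_not Finset.univ
      (fun i => 0 < lam i) (fun i => lam i • (fun j => (F.e i j : ℝ)))
    rw [hlamker] at hsplit
    have hrest : ∑ i ∈ Finset.univ.filter (fun i => ¬ 0 < lam i),
        lam i • (fun j => (F.e i j : ℝ)) = ∑ i ∈ B, lam i • (fun j => (F.e i j : ℝ)) := by
      symm
      apply Finset.sum_subset
      · intro i hi
        simp only [hB', Finset.mem_filter, Finset.mem_univ, true_and] at hi ⊢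
        exact not_lt.mpr (le_of_lt hi)
      · intro i hi hni
        simp only [hB', Finset.mem_filter, Finset.mem_univ, true_and, not_lt] at hi hni
        have : lam i = 0 := le_antisymm hi hni
        rw [this, zero_smul]
    rw [hrest] at hsplit
    have : x = - ∑ i ∈ B, lam i • (fun j => (F.e i j : ℝ)) := by
      rw [hx]
      have := hsplit
      -- x + rest = 0
      rw [eq_neg_iff_add_eq_zero]
      exact this
    rw [this, ← Finset.sum_neg_distrib]
    apply Finset.sum_congr rfl
    intro i _
    rw [neg_smul]
  have hxB : x ∈ fanConeSet F.e B := by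
    have h := posPart_mem F.e (-lam)
    have hBeq : Finset.univ.filter (fun i => 0 < (-lam) i) = B := by
      apply Finset.filter_congr
      intro i _
      simp [neg_pos]
    rw [hBeq] at h
    have hsum : ∑ i ∈ B, (-lam) i • (fun j => (F.e i j : ℝ))
        = ∑ i ∈ B, (-lam i) • (fun j => (F.e i j : ℝ)) := rfl
    rw [hsum] at h
    rwa [← hxB'] at h
  have hABempty : A ∩ B = ∅ := by
    ext i
    simp only [Finset.mem_inter, hA, hB', Finset.mem_filter, Finset.mem_univ, true_and,
      Finset.notMem_empty, iff_false]
    rintro ⟨h1, h2⟩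
    exact lt_asymm h1 h2
  have hx0 : x = 0 := by
    have := F.inter hconeA hconeB
    have hmem : x ∈ fanConeSet F.e (A ∩ B) := by
      rw [← this]
      exact ⟨hxA, hxB⟩
    rw [hABempty, fanConeSet_empty] at hmem
    exact hmem
  -- so all coefficients vanish, contradiction with lam ≠ 0
  have hAzero : ∀ i ∈ A, lam i = 0 := by
    apply cone_coeff_zero F hconeA
    rw [← hx, hx0]
  have hBzero : ∀ i ∈ B, -lam i = 0 := by
    apply cone_coeff_zero F hconeB
    rw [← hxB', hx0]
  apply hlamne
  funext i
  rcases lt_trichotomy (lam i) 0 with h | h | h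
  · have : i ∈ B := by
      simp only [hB', Finset.mem_filter, Finset.mem_univ, true_and]
      exact h
    have := hBzero i this
    simpa using this
  · exact h
  · have : i ∈ A := by
      simp only [hA, Finset.mem_filter, Finset.mem_univ, true_and]
      exact h
    exact hAzero i this

/-- In the simplex case `n = d+1`, the whole set of rays is not a cone, but
every complement of a single ray is. -/
lemma simplex_endgame (hd : 0 < d) (F : CompleteFan d n) (hn : n = d + 1) :
    (¬ F.isCone Finset.univ) ∧ (∀ i : Fin n, F.isCone {i}ᶜ) := by
  classical
  have hnuniv : ¬ F.isCone Finset.univ := by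
    intro h
    have hli := F.indep h
    have hcard := hli.fintype_card_le_finrank
    rw [Module.finrank_fintype_fun_eq_card, Fintype.card_fin] at hcard
    rw [Fintype.card_coe, Finset.card_univ, Fintype.card_fin] at hcard
    omega
  obtain ⟨mu, hmu0, hmudep⟩ := exists_pos_dep F
  set W := LinearMap.ker (depMap F.e) with hWdef
  have hk1 : Module.finrank ℝ W = 1 := by
    have h := finrank_ker_depMap F
    rw [← hWdef] at h
    omega
  have hmuW : mu ∈ W := LinearMap.mem_ker.mpr hmudep
  have hmune : mu ≠ 0 := by
    intro h
    have h0 : 0 < n := by omega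
    have := hmu0 ⟨0, h0⟩
    rw [h] at this
    simp at this
  have hspan : W = Submodule.span ℝ {mu} := by
    symm
    apply Submodule.eq_of_le_of_finrank_le
    · rwa [Submodule.span_singleton_le_iff_mem]
    · rw [finrank_span_singleton hmune, hk1]
  refine ⟨hnuniv, fun i => ?_⟩
  set w : Fin n → ℝ := fun j => if j = i then 0 else 1 with hw
  obtain ⟨σ, hσcone, c, hc0, hcsupp, hveq⟩ := F.complete (depMap F.e w)
  have hδ : w - c ∈ W := by
    rw [hWdef, LinearMap.mem_ker, map_sub]
    have : depMap F.e c = depMap F.e w := hveq.symm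
    rw [this, sub_self]
  rw [hspan] at hδ
  obtain ⟨t, ht⟩ := Submodule.mem_span_singleton.mp hδ
  -- ht : t • mu = w - c
  have hti : t * mu i = - c i := by
    have := congrFun ht i
    simp only [Pi.smul_apply, smul_eq_mul, Pi.sub_apply, hw] at this
    simpa using this
  rcases lt_trichotomy t 0 with htneg | hteq | htpos
  · exfalso
    apply hnuniv
    have hall : ∀ j, j ∈ σ := by
      intro j
      have hcj : 0 < c j := by
        rcases eq_or_ne j i with rfl | hne
        · nlinarith [hmu0 j]
        · have := congrFun ht j
          simp only [Pi.smul_apply, smul_eq_mul, Pi.sub_apply, hw, if_neg hne] at this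
          nlinarith [hmu0 j]
      by_contra hns
      rw [hcsupp j hns] at hcj
      exact lt_irrefl 0 hcj
    exact F.downward hσcone (fun j _ => hall j)
  · apply F.downward hσcone
    intro j hj
    have hji : j ≠ i := by
      simpa [Finset.mem_compl] using hj
    have hcj : c j = 1 := by
      have := congrFun ht j
      simp only [Pi.smul_apply, smul_eq_mul, Pi.sub_apply, hw, if_neg hji, hteq,
        zero_mul] at this
      linarith
    by_contra hns
    rw [hcsupp j hns] at hcj
    norm_num at hcj
  · exfalso
    have := hc0 i
    nlinarith [hmu0 i]

end Fan

/-- for a complete simplicial fan `Σ` of dimension `d` with `n`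
rays, either `2 ≤ codim Z(Σ) ≤ ⌊d/2⌋ + 1`, or `n = d + 1` and `Z(Σ) = {0}`. -/
theorem codim_Z_bound {d n : ℕ} (hd : 0 < d) (F : CompleteFan d n) :
    (2 ≤ codimZ F ∧ codimZ F ≤ d / 2 + 1) ∨
      (n = d + 1 ∧
        {z : Fin n → ℂ | ∀ σ : Finset (Fin n), F.isCone σ → ∏ i ∈ σᶜ, z i = 0}
          = {0}) := by
  classical
  by_cases hB : ∀ A : Finset (Fin n), A.card ≤ d / 2 + 1 → F.isCone A
  · right
    have hn1 : d + 1 ≤ n := n_ge_d_add_one hd F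
    have hn2 : n < d + 2 := by
      by_contra h
      exact no_big_fan hd F hB (by omega)
    have hn : n = d + 1 := by omega
    obtain ⟨hnuniv, hcompl⟩ := simplex_endgame hd F hn
    refine ⟨hn, ?_⟩
    ext z
    simp only [Set.mem_setOf_eq, Set.mem_singleton_iff]
    constructor
    · intro hz
      funext i
      have := hz {i}ᶜ (hcompl i)
      rwa [compl_compl, Finset.prod_singleton] at this
    · intro hz σ hσ
      subst hz
      have hσne : σ ≠ Finset.univ := fun hh => hnuniv (hh ▸ hσ)
      have hne : σᶜ.Nonempty := by
        rw [← Finset.card_pos, Finset.card_compl]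
        have h1 : σ.card ≤ Fintype.card (Fin n) := Finset.card_le_univ σ
        have h2 : σ.card ≠ Fintype.card (Fin n) :=
          fun hh => hσne (Finset.card_eq_iff_eq_univ σ |>.mp hh)
        omega
      obtain ⟨i, hi⟩ := hne
      exact Finset.prod_eq_zero hi rfl
  · left
    push_neg at hB
    obtain ⟨A₀, hA₀card, hA₀⟩ := hB
    set K := {k : ℕ | ∃ A : Finset (Fin n), ¬ F.isCone A ∧ A.card = k} with hK
    have hKne : A₀.card ∈ K := ⟨A₀, hA₀, rfl⟩
    obtain ⟨P, hPnc, hPcard⟩ := Nat.sInf_mem (⟨A₀.card, hKne⟩ : K.Nonempty)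
    have hPrim : IsPrimitiveCollection F P := by
      refine ⟨hPnc, fun Q hQ => ?_⟩
      by_contra hc
      have h1 : sInf K ≤ Q.card := Nat.sInf_le ⟨Q, hc, rfl⟩
      have h2 : Q.card < P.card := Finset.card_lt_card hQ
      omega
    have hmem : P.card ∈ {k : ℕ | ∃ P' : Finset (Fin n),
        IsPrimitiveCollection F P' ∧ P'.card = k} := ⟨P, hPrim, rfl⟩
    have hSne : {k : ℕ | ∃ P' : Finset (Fin n),
        IsPrimitiveCollection F P' ∧ P'.card = k}.Nonempty := ⟨P.card, hmem⟩
    constructor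
    · obtain ⟨P', hP'prim, hP'card⟩ := Nat.sInf_mem hSne
      unfold codimZ
      rw [← hP'card]
      rcases Nat.lt_or_ge P'.card 2 with h | h
      · exfalso
        rcases (by omega : P'.card = 0 ∨ P'.card = 1) with h0 | h1
        · rw [Finset.card_eq_zero.mp h0] at hP'prim
          exact hP'prim.1 F.empty_mem
        · obtain ⟨i, rfl⟩ := Finset.card_eq_one.mp h1
          exact hP'prim.1 (F.singleton_mem i)
      · exact h
    · unfold codimZ
      have h1 : sInf {k : ℕ | ∃ P' : Finset (Fin n),
          IsPrimitiveCollection F P' ∧ P'.card = k} ≤ P.card := Nat.sInf_le hmem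
      have h2 : sInf K ≤ A₀.card := Nat.sInf_le hKne
      omega
end
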